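/- Let f : ℝ → ℝ be bounded and regulated, and satisfy the no-jamming condition. Let xₙ : [t₁,t₂] → ℝ be a sequence of nondecreasing Carathéodory solutions of ẋ = f(x) which converges pointwise on [t₁,t₂] to a constant function with value c. Then f(c) = 0. -/

import Mathlib

open MeasureTheory Set Filter

/-- `f` is regulated with left limits `fl` and right limits `fr`. -/
def Regulated (f fl fr : ℝ → ℝ) : Prop :=
  ∀ y : ℝ,
    Filter.Tendsto f (nhdsWithin y (Set.Iio y)) (nhds (fl y)) ∧
    Filter.Tendsto f (nhdsWithin y (Set.Ioi y)) (nhds (fr y))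

/-- The no-jamming condition: if `f(y−)·f(y+) = 0` or `f(y−) > 0 > f(y+)`, then `f(y) = 0`. -/
def NoJamming (f fl fr : ℝ → ℝ) : Prop :=
  ∀ y : ℝ, (fl y * fr y = 0 ∨ (0 < fl y ∧ fr y < 0)) → f y = 0

/-! Suppose `f c ≠ 0`; no-jamming leaves three sign patterns for `(f(c−), f(c+))`. A solution
cannot rest at the non-equilibrium `c`, so `{x = c}` is at most one point, and off it `f ∘ x` has
the sign of the relevant one-sided limit while `x` stays near `c`. If both limits are negative, a
solution near `c` would decrease. If `f(c−) < 0 < f(c+)`, a nondecreasing solution near `c` cannot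
be below `c` after its initial time, for the same reason. So in the two remaining cases
`f ∘ x ≥ ε` a.e. for one `ε > 0` and all nondecreasing solutions near `c`, and
`x_n(t₂) - x_n(t₁) ≥ ε (t₂ - t₁)` contradicts the convergence of both ends to `c`. -/

open Topology

def IsCaratheodorySolution (f x : ℝ → ℝ) (a b : ℝ) : Prop :=
  ∀ t ∈ Icc a b, x t = x a + ∫ s in a..t, f (x s)

namespace IsCaratheodorySolution

variable {f x : ℝ → ℝ} {a b c u v ε : ℝ}

/-- Were `f ∘ x` not integrable on `[a, b]`, the integral would be `0`, so the monotone `x`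
would be constant on `[a, b]`, and then `f ∘ x` would be integrable after all. -/
lemma intervalIntegrable (h : IsCaratheodorySolution f x a b) (hx : MonotoneOn x (Icc a b))
    (hu : u ∈ Icc a b) (hv : v ∈ Icc a b) : IntervalIntegrable (fun s => f (x s)) volume u v := by
  have hab : a ≤ b := hu.1.trans hu.2
  refine IntervalIntegrable.mono_set ?_
    (uIcc_subset_uIcc (Icc_subset_uIcc hu) (Icc_subset_uIcc hv))
  by_contra hni
  have hb := h b (right_mem_Icc.2 hab)
  rw [intervalIntegral.integral_undef hni, add_zero] at hb
  have hconst : EqOn (fun _ => f (x a)) (fun s => f (x s)) (uIoc a b) := by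
    intro s hs
    rw [uIoc_of_le hab] at hs
    have := hx (left_mem_Icc.2 hab) (Ioc_subset_Icc_self hs) hs.1.le
    have := hx (Ioc_subset_Icc_self hs) (right_mem_Icc.2 hab) hs.2
    simp only [show x s = x a by linarith]
  exact hni (intervalIntegrable_const.congr hconst)

lemma sub_eq_integral (h : IsCaratheodorySolution f x a b) (hx : MonotoneOn x (Icc a b))
    (hu : u ∈ Icc a b) (hv : v ∈ Icc a b) : x v - x u = ∫ s in u..v, f (x s) := by
  have ha : a ∈ Icc a b := left_mem_Icc.2 (hu.1.trans hu.2)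
  rw [h v hv, h u hu, ← intervalIntegral.integral_interval_sub_left
    (h.intervalIntegrable hx ha hv) (h.intervalIntegrable hx ha hu)]
  ring

lemma subsingleton_setOf_eq (h : IsCaratheodorySolution f x a b) (hx : MonotoneOn x (Icc a b))
    (hfc : f c ≠ 0) : {s ∈ Icc a b | x s = c}.Subsingleton := by
  have hnlt : ∀ u ∈ {s ∈ Icc a b | x s = c}, ∀ v ∈ {s ∈ Icc a b | x s = c}, ¬u < v := by
    rintro u ⟨hu, hxu⟩ v ⟨hv, hxv⟩ huv
    -- `x` is squeezed to `c` on `[u, v]`, so `0 = x v - x u = (v - u) f(c)`.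
    have hconst : ∫ s in u..v, f (x s) = ∫ _ in u..v, f c := by
      refine intervalIntegral.integral_congr fun s hs => ?_
      rw [uIcc_of_le huv.le] at hs
      have hsI : s ∈ Icc a b := ⟨hu.1.trans hs.1, hs.2.trans hv.2⟩
      simp only [le_antisymm (hxv ▸ hx hsI hv hs.2) (hxu ▸ hx hu hsI hs.1)]
    have hzero := h.sub_eq_integral hx hu hv
    rw [hconst, intervalIntegral.integral_const, smul_eq_mul, hxu, hxv, sub_self] at hzero
    exact mul_ne_zero (sub_ne_zero.2 huv.ne') hfc hzero.symm
  exact fun u hu v hv => le_antisymm (not_lt.1 (hnlt v hv u hu)) (not_lt.1 (hnlt u hu v hv))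

lemma ae_of_forall_ne {P : ℝ → Prop} (h : IsCaratheodorySolution f x a b)
    (hx : MonotoneOn x (Icc a b)) (hfc : f c ≠ 0) (hP : ∀ s ∈ Ioc a b, x s ≠ c → P s) :
    ∀ᵐ s ∂volume.restrict (Icc a b), P s := by
  have hne : ∀ᵐ s ∂volume.restrict (Icc a b), x s ≠ c := by
    rw [ae_restrict_iff' measurableSet_Icc]
    refine measure_mono_null (fun s hs => ?_)
      ((h.subsingleton_setOf_eq hx hfc).measure_zero volume)
    simpa [and_assoc] using hs
  rw [← Measure.restrict_congr_set Ioc_ae_eq_Icc] at hne ⊢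
  filter_upwards [ae_restrict_mem measurableSet_Ioc, hne] with s hs hs' using hP s hs hs'

lemma mul_sub_le_sub (h : IsCaratheodorySolution f x a b) (hx : MonotoneOn x (Icc a b))
    (hab : a ≤ b) (hfc : f c ≠ 0) (hε : ∀ s ∈ Ioc a b, x s ≠ c → ε ≤ f (x s)) :
    ε * (b - a) ≤ x b - x a := by
  have := intervalIntegral.integral_mono_ae_restrict hab intervalIntegrable_const
    (h.intervalIntegrable hx (left_mem_Icc.2 hab) (right_mem_Icc.2 hab))
    (h.ae_of_forall_ne hx hfc hε)
  rw [intervalIntegral.integral_const, smul_eq_mul] at this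
  linarith [h b (right_mem_Icc.2 hab)]

lemma sub_le_mul_sub (h : IsCaratheodorySolution f x a b) (hx : MonotoneOn x (Icc a b))
    (hab : a ≤ b) (hfc : f c ≠ 0) (hε : ∀ s ∈ Ioc a b, x s ≠ c → f (x s) ≤ ε) :
    x b - x a ≤ ε * (b - a) := by
  have := intervalIntegral.integral_mono_ae_restrict hab
    (h.intervalIntegrable hx (left_mem_Icc.2 hab) (right_mem_Icc.2 hab)) intervalIntegrable_const
    (h.ae_of_forall_ne hx hfc hε)
  rw [intervalIntegral.integral_const, smul_eq_mul] at this
  linarith [h b (right_mem_Icc.2 hab)]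

/-- If `x t < c` for some `t > a`, then `f ∘ x < 0` on `(a, t)` and `x t < x a`. -/
lemma le_of_forall_lt_imp_neg (h : IsCaratheodorySolution f x a b) (hx : MonotoneOn x (Icc a b))
    (hneg : ∀ s ∈ Ioc a b, x s < c → f (x s) < 0) : ∀ t ∈ Ioc a b, c ≤ x t := by
  intro t ht
  by_contra! hlt
  have htI : t ∈ Icc a b := Ioc_subset_Icc_self ht
  have haI : a ∈ Icc a b := left_mem_Icc.2 (htI.1.trans htI.2)
  have hpos : 0 < ∫ s in a..t, -f (x s) := by
    refine intervalIntegral.intervalIntegral_pos_of_pos_on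
      (h.intervalIntegrable hx haI htI).neg (fun s hs => ?_) ht.1
    have hsI : s ∈ Icc a b := ⟨hs.1.le, hs.2.le.trans ht.2⟩
    exact neg_pos.2 (hneg s ⟨hs.1, hsI.2⟩ ((hx hsI htI hs.2.le).trans_lt hlt))
  rw [intervalIntegral.integral_neg, ← h.sub_eq_integral hx haI htI] at hpos
  linarith [hx haI htI htI.1]

end IsCaratheodorySolution

lemma eventually_mapsTo_of_tendsto {ι : Type*} {l : Filter ι} {xn : ι → ℝ → ℝ} {a b c : ℝ}
    {U : Set ℝ} (hmono : ∀ i, MonotoneOn (xn i) (Icc a b))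
    (ha : Tendsto (fun i => xn i a) l (𝓝 c)) (hb : Tendsto (fun i => xn i b) l (𝓝 c))
    (hU : U ∈ 𝓝 c) : ∀ᶠ i in l, MapsTo (xn i) (Icc a b) U := by
  obtain ⟨lb, ub, hc, hsub⟩ := mem_nhds_iff_exists_Ioo_subset.1 hU
  filter_upwards [ha.eventually (lt_mem_nhds hc.1), hb.eventually (gt_mem_nhds hc.2)]
    with i hai hbi s hs
  exact hsub ⟨hai.trans_le (hmono i ⟨le_rfl, hs.1.trans hs.2⟩ hs hs.1),
    (hmono i hs ⟨hs.1.trans hs.2, le_rfl⟩ hs.2).trans_lt hbi⟩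

namespace Regulated

variable {f fl fr : ℝ → ℝ} {c : ℝ}

lemma eventually_nhds {P Q : ℝ → Prop} (hreg : Regulated f fl fr) (c : ℝ)
    (hP : ∀ᶠ z in 𝓝 (fl c), P z) (hQ : ∀ᶠ z in 𝓝 (fr c), Q z) :
    ∀ᶠ y in 𝓝 c, (y < c → P (f y)) ∧ (c < y → Q (f y)) :=
  (eventually_nhdsWithin_iff.1 ((hreg c).1.eventually hP)).and
    (eventually_nhdsWithin_iff.1 ((hreg c).2.eventually hQ))

lemma exists_nhds_forall_not_mapsTo (hreg : Regulated f fl fr) (hfl : fl c < 0) (hfr : fr c < 0)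
    (hfc : f c ≠ 0) :
    ∃ U ∈ 𝓝 c, ∀ {x : ℝ → ℝ} {a b : ℝ}, IsCaratheodorySolution f x a b →
      MonotoneOn x (Icc a b) → a < b → ¬MapsTo x (Icc a b) U := by
  set ε := max (fl c / 2) (fr c / 2)
  have hε : ε < 0 := max_lt (by linarith) (by linarith)
  refine ⟨_, hreg.eventually_nhds c (eventually_le_nhds (show fl c < ε by grind))
    (eventually_le_nhds (show fr c < ε by grind)), fun h hx hab hU => ?_⟩
  have hdec := h.sub_le_mul_sub hx hab.le hfc (ε := ε) fun s hs hne =>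
    hne.lt_or_gt.elim (hU (Ioc_subset_Icc_self hs)).1 (hU (Ioc_subset_Icc_self hs)).2
  nlinarith [hx (left_mem_Icc.2 hab.le) (right_mem_Icc.2 hab.le) hab.le]

lemma exists_pos_nhds_forall_le (hreg : Regulated f fl fr) (hfl : fl c ≠ 0) (hfr : 0 < fr c) :
    ∃ ε > 0, ∃ U ∈ 𝓝 c, ∀ {x : ℝ → ℝ} {a b : ℝ}, IsCaratheodorySolution f x a b →
      MonotoneOn x (Icc a b) → MapsTo x (Icc a b) U → ∀ s ∈ Ioc a b, x s ≠ c → ε ≤ f (x s) := by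
  rcases hfl.lt_or_gt with hfl | hfl
  · refine ⟨fr c / 2, by linarith, _, hreg.eventually_nhds c (eventually_lt_nhds hfl)
      (eventually_ge_nhds (show fr c / 2 < fr c by linarith)), fun h hx hU s hs hne => ?_⟩
    have hcs := h.le_of_forall_lt_imp_neg hx
      (fun s hs => (hU (Ioc_subset_Icc_self hs)).1) s hs
    exact (hU (Ioc_subset_Icc_self hs)).2 (hcs.lt_of_ne' hne)
  · set ε := min (fl c / 2) (fr c / 2)
    refine ⟨ε, lt_min (by linarith) (by linarith), _,
      hreg.eventually_nhds c (eventually_ge_nhds (show ε < fl c by grind))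
        (eventually_ge_nhds (show ε < fr c by grind)), fun _ _ hU s hs hne => ?_⟩
    exact hne.lt_or_gt.elim (hU (Ioc_subset_Icc_self hs)).1 (hU (Ioc_subset_Icc_self hs)).2

end Regulated

theorem limit_constant_is_zero_of_f_general
    (f : ℝ → ℝ)
    (fl fr : ℝ → ℝ) (hreg : Regulated f fl fr) (hnj : NoJamming f fl fr)
    (t₁ t₂ : ℝ) (ht : t₁ < t₂)
    (xn : ℕ → ℝ → ℝ)
    (hmono : ∀ n : ℕ, MonotoneOn (xn n) (Set.Icc t₁ t₂))
    (hsol : ∀ n : ℕ, ∀ t ∈ Set.Icc t₁ t₂, xn n t = xn n t₁ + ∫ s in t₁..t, f (xn n s))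
    (c : ℝ)
    (hconv : ∀ t ∈ Set.Icc t₁ t₂,
      Filter.Tendsto (fun n : ℕ => xn n t) Filter.atTop (nhds c)) :
    f c = 0 := by
  by_contra hfc
  have hsol : ∀ n, IsCaratheodorySolution f (xn n) t₁ t₂ := hsol
  have hx₁ := hconv t₁ (left_mem_Icc.2 ht.le)
  have hx₂ := hconv t₂ (right_mem_Icc.2 ht.le)
  have hfl : fl c ≠ 0 := fun h => hfc (hnj c (Or.inl (by simp [h])))
  rcases (show fr c ≠ 0 from fun h => hfc (hnj c (Or.inl (by simp [h])))).lt_or_gt with hfr | hfr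
  · have hfl : fl c < 0 := hfl.lt_or_gt.resolve_right fun h => hfc (hnj c (Or.inr ⟨h, hfr⟩))
    obtain ⟨U, hU, hnot⟩ := hreg.exists_nhds_forall_not_mapsTo hfl hfr hfc
    obtain ⟨n, hn⟩ := (eventually_mapsTo_of_tendsto hmono hx₁ hx₂ hU).exists
    exact hnot (hsol n) (hmono n) ht hn
  · obtain ⟨ε, hε, U, hU, hle⟩ := hreg.exists_pos_nhds_forall_le hfl hfr
    have hinc : Tendsto (fun n => xn n t₂ - xn n t₁) atTop (𝓝 0) := by
      simpa using hx₂.sub hx₁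
    obtain ⟨n, hn, hsmall⟩ := ((eventually_mapsTo_of_tendsto hmono hx₁ hx₂ hU).and
      (hinc.eventually (eventually_lt_nhds (mul_pos hε (sub_pos.2 ht))))).exists
    linarith [(hsol n).mul_sub_le_sub (hmono n) ht.le hfc (hle (hsol n) (hmono n) hn)]

/-- If nondecreasing Carathéodory solutions of `ẋ = f(x)` on `[t₁,t₂]`
converge pointwise to a constant `c`, then `f(c) = 0`. -/
theorem limit_constant_is_zero_of_f
    (f : ℝ → ℝ) (M : ℝ) (hb : ∀ y : ℝ, |f y| ≤ M)
    (fl fr : ℝ → ℝ) (hreg : Regulated f fl fr) (hnj : NoJamming f fl fr)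
    (t₁ t₂ : ℝ) (ht : t₁ < t₂)
    (xn : ℕ → ℝ → ℝ)
    (hmono : ∀ n : ℕ, MonotoneOn (xn n) (Set.Icc t₁ t₂))
    (hsol : ∀ n : ℕ, ∀ t ∈ Set.Icc t₁ t₂, xn n t = xn n t₁ + ∫ s in t₁..t, f (xn n s))
    (c : ℝ)
    (hconv : ∀ t ∈ Set.Icc t₁ t₂,
      Filter.Tendsto (fun n : ℕ => xn n t) Filter.atTop (nhds c)) :
    f c = 0 :=
  limit_constant_is_zero_of_f_general f fl fr hreg hnj t₁ t₂ ht xn hmono hsol c hconv
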